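/- Let γ = (t, x) : [0, T] → ℝ × N be a timelike geodesic of the standard stationary metric g = -λ(dt - ω)² + h with |γ̇|²_g = -m² and momentum (∂_t, γ̇)_g = ρ. Then the time-free action of energy -m²/2 of the MP-system (N, h, ρ dω, ρ²/(-2λ)) along x, namely 𝔸(x) = ½∫₀ᵀ|ẋ|²_h ds - m²T/2 - ∫₀ᵀ(⟨ρω, ẋ⟩ + ρ²/(-2λ(x)))ds, equals ρ(t(0) - t(T)) - m²T. -/

import Mathlib

/-!
The conservation laws determine both integrands of the action pointwise. Writing
`c = ṫ - ⟨ω, ẋ⟩`, the momentum gives `c = -ρ/λ`, so the mass relation becomes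
`|ẋ|²_h = ρ²/λ - m²` and the magnetic term becomes `ρ⟨ω, ẋ⟩ = ρṫ + ρ²/λ`. The `ρ²/λ`
contributions cancel in the action, leaving `-m²T - ρ∫ṫ = ρ(t(0) - t(T)) - m²T`.
-/

open scoped BigOperators

noncomputable section

/-- Euclidean pairing of a covector (given by components) with a vector. -/
def pairv {n : ℕ} (a b : Fin n → ℝ) : ℝ := ∑ i, a i * b i

/-- The bilinear form associated to a matrix `A` (the metric `h` in coordinates). -/
def innH {n : ℕ} (A : Matrix (Fin n) (Fin n) ℝ) (u v : Fin n → ℝ) : ℝ :=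
  ∑ i, ∑ j, A i j * u i * v j

lemma pairv_const_mul_left {n : ℕ} (r : ℝ) (a b : Fin n → ℝ) :
    pairv (fun i => r * a i) b = r * pairv a b := by
  simp only [pairv, Finset.mul_sum, mul_assoc]

lemma eq_div_sub_of_momentum_of_mass {lam c ρ v m : ℝ} (hlam : lam ≠ 0)
    (hmom : -lam * c = ρ) (hmass : -lam * c ^ 2 + v = -m ^ 2) :
    v = ρ ^ 2 / lam - m ^ 2 := by
  have hρ : ρ ^ 2 / lam = lam * c ^ 2 := by
    rw [← hmom, div_eq_iff hlam]
    ring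
  rw [hρ]
  linear_combination hmass

lemma momentum_mul_eq_of_momentum {lam τ w ρ : ℝ} (hlam : lam ≠ 0)
    (hmom : -lam * (τ - w) = ρ) :
    ρ * w = ρ * τ + ρ ^ 2 / lam := by
  subst hmom
  field_simp
  ring

lemma half_integral_sub_integral_eq {q t : ℝ → ℝ} {a b m ρ : ℝ}
    (hq : IntervalIntegrable q MeasureTheory.volume a b) (ht : Differentiable ℝ t)
    (htc : Continuous (deriv t)) :
    (1 / 2) * (∫ s in a..b, (q s - m ^ 2)) - m ^ 2 * (b - a) / 2
      - ∫ s in a..b, (ρ * deriv t s + q s / 2)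
    = ρ * (t a - t b) - m ^ 2 * (b - a) := by
  have hdt : IntervalIntegrable (deriv t) MeasureTheory.volume a b := htc.intervalIntegrable a b
  have hftc : ∫ s in a..b, deriv t s = t b - t a :=
    intervalIntegral.integral_deriv_eq_sub (fun s _ => ht s) hdt
  rw [intervalIntegral.integral_sub hq intervalIntegrable_const,
    intervalIntegral.integral_add (hdt.const_mul ρ) (hq.div_const 2),
    intervalIntegral.integral_const_mul, intervalIntegral.integral_div, hftc,
    intervalIntegral.integral_const, smul_eq_mul]
  ring

theorem time_free_action_along_projected_geodesic_general {n : ℕ}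
    (lam : (Fin n → ℝ) → ℝ) (ω : (Fin n → ℝ) → (Fin n → ℝ))
    (H : (Fin n → ℝ) → Matrix (Fin n) (Fin n) ℝ)
    (hlam : ∀ y, 0 < lam y) (hlamc : Continuous lam)
    (t : ℝ → ℝ) (x : ℝ → Fin n → ℝ) (m ρ T : ℝ)
    (ht : Differentiable ℝ t) (htc : Continuous (deriv t))
    (hx : Differentiable ℝ x)
    (hmom : ∀ s : ℝ,
      -lam (x s) * (deriv t s - pairv (ω (x s)) (deriv x s)) = ρ)
    (hmass : ∀ s : ℝ,
      -lam (x s) * (deriv t s - pairv (ω (x s)) (deriv x s)) ^ 2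
        + innH (H (x s)) (deriv x s) (deriv x s) = -m ^ 2) :
    (1 / 2) * (∫ s in (0:ℝ)..T, innH (H (x s)) (deriv x s) (deriv x s))
      - m ^ 2 * T / 2
      - (∫ s in (0:ℝ)..T,
          (pairv (fun i => ρ * ω (x s) i) (deriv x s) + ρ ^ 2 / (-(2 * lam (x s)))))
    = ρ * (t 0 - t T) - m ^ 2 * T := by
  have hlam0 : ∀ s, lam (x s) ≠ 0 := fun s => (hlam _).ne'
  have hkinetic : ∀ s, innH (H (x s)) (deriv x s) (deriv x s) = ρ ^ 2 / lam (x s) - m ^ 2 :=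
    fun s => eq_div_sub_of_momentum_of_mass (hlam0 s) (hmom s) (hmass s)
  have hmagnetic : ∀ s, pairv (fun i => ρ * ω (x s) i) (deriv x s) + ρ ^ 2 / (-(2 * lam (x s)))
      = ρ * deriv t s + ρ ^ 2 / lam (x s) / 2 := by
    intro s
    rw [pairv_const_mul_left, momentum_mul_eq_of_momentum (hlam0 s) (hmom s)]
    field_simp
    ring
  have hq : Continuous fun s => ρ ^ 2 / lam (x s) :=
    continuous_const.div (hlamc.comp hx.continuous) hlam0
  simp_rw [hkinetic, hmagnetic]
  simpa only [sub_zero] using half_integral_sub_integral_eq (hq.intervalIntegrable 0 T) ht htc (m := m) (ρ := ρ)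

/-- For a timelike geodesic `γ = (t, x) : [0,T] → ℝ × N` of the standard
stationary metric with `|γ̇|²_g = -m²` and momentum `ρ`, the time-free action of energy
`-m²/2` of the MP-system `(N, h, ρ dω, ρ²/(-2λ))` along `x` equals `ρ(t(0) - t(T)) - m²T`. -/
theorem time_free_action_along_projected_geodesic {n : ℕ}
    (lam : (Fin n → ℝ) → ℝ) (ω : (Fin n → ℝ) → (Fin n → ℝ))
    (H : (Fin n → ℝ) → Matrix (Fin n) (Fin n) ℝ)
    (hlam : ∀ y, 0 < lam y) (hlamc : Continuous lam) (hωc : Continuous ω)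
    (hHc : ∀ i j, Continuous (fun y => H y i j))
    (t : ℝ → ℝ) (x : ℝ → Fin n → ℝ) (m ρ T : ℝ) (hT : 0 ≤ T)
    (ht : Differentiable ℝ t) (htc : Continuous (deriv t))
    (hx : Differentiable ℝ x) (hxc : Continuous (deriv x))
    (hmom : ∀ s : ℝ,
      -lam (x s) * (deriv t s - pairv (ω (x s)) (deriv x s)) = ρ)
    (hmass : ∀ s : ℝ,
      -lam (x s) * (deriv t s - pairv (ω (x s)) (deriv x s)) ^ 2
        + innH (H (x s)) (deriv x s) (deriv x s) = -m ^ 2) :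
    (1 / 2) * (∫ s in (0:ℝ)..T, innH (H (x s)) (deriv x s) (deriv x s))
      - m ^ 2 * T / 2
      - (∫ s in (0:ℝ)..T,
          (pairv (fun i => ρ * ω (x s) i) (deriv x s) + ρ ^ 2 / (-(2 * lam (x s)))))
    = ρ * (t 0 - t T) - m ^ 2 * T :=
  time_free_action_along_projected_geodesic_general lam ω H hlam hlamc t x m ρ T ht htc hx hmom
    hmass
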